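/- Unique symmetric edge exchanges are reversible: if (S,T) are disjoint spanning trees of a bispanning graph G and (e,f) ∈ S × T satisfies D(S,e) ∩ C(T,e) = {e,f}, then for the pair (S' , T') = (S - e + f, T + e - f) one has D(S',f) ∩ C(T',f) = {e,f}, i.e. (f,e) is a unique exchange of (S',T') returning to (S,T). -/

import Mathlib

namespace MG

variable {V E : Type*}

/-- Two vertices are joined by an edge of `F`. -/
def Adj (ends : E → Sym2 V) (F : Set E) (u v : V) : Prop :=
  ∃ e ∈ F, ends e = s(u, v)

/-- Reachability using edges of `F`. -/
def Reach (ends : E → Sym2 V) (F : Set E) : V → V → Prop :=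
  Relation.ReflTransGen (Adj ends F)

/-- The edge set `F` connects all vertices of the multigraph. -/
def Conn (ends : E → Sym2 V) (F : Set E) : Prop :=
  ∀ u v : V, Reach ends F u v

/-- `F` is a spanning tree: it connects all vertices using exactly `|V| - 1` edges. -/
def IsSpanningTree (ends : E → Sym2 V) (F : Set E) : Prop :=
  Conn ends F ∧ Nat.card F = Nat.card V - 1

/-- The multigraph is bispanning: its edge set is the disjoint union of two spanning trees. -/
def Bispanning (ends : E → Sym2 V) : Prop :=
  ∃ S T : Set E, S ∪ T = Set.univ ∧ Disjoint S T ∧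
    IsSpanningTree ends S ∧ IsSpanningTree ends T

/-- Degree of a vertex: number of incident edges. -/
noncomputable def deg (ends : E → Sym2 V) (v : V) : ℕ :=
  Nat.card {e : E | v ∈ ends e}

/-- `C` is (the edge set of) a simple cycle: nonempty, connected, and every
incident vertex is incident to exactly two edges of `C`. -/
def IsCycle (ends : E → Sym2 V) (C : Set E) : Prop :=
  C.Nonempty ∧
  (∀ u v : V, (∃ e ∈ C, u ∈ ends e) → (∃ e ∈ C, v ∈ ends e) → Reach ends C u v) ∧
  (∀ v : V, (∃ e ∈ C, v ∈ ends e) → Nat.card {e : E | e ∈ C ∧ v ∈ ends e} = 2)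

/-- Number of connected components when only edges of `F` are used. -/
noncomputable def numComp (ends : E → Sym2 V) (F : Set E) : ℕ :=
  Nat.card (Quot (Reach ends F))

/-- `D` is an edge cut: removing it increases the number of components. -/
def IsEdgeCut (ends : E → Sym2 V) (D : Set E) : Prop :=
  numComp ends Set.univ < numComp ends Dᶜ

/-- A minimal edge cut: no proper subset is an edge cut. -/
def IsMinEdgeCut (ends : E → Sym2 V) (D : Set E) : Prop :=
  IsEdgeCut ends D ∧ ∀ D' : Set E, D' ⊂ D → ¬ IsEdgeCut ends D'

/-- `D` is the fundamental cut of the tree edge `e` of the spanning tree `F`: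
the minimal edge cut contained in `(E \ F) + e`, which contains `e`. -/
def IsFundCut (ends : E → Sym2 V) (F : Set E) (e : E) (D : Set E) : Prop :=
  D ⊆ insert e Fᶜ ∧ e ∈ D ∧ IsMinEdgeCut ends D

/-- `C` is the fundamental cycle of the non-tree edge `e` w.r.t. the spanning tree `F`:
the cycle contained in `F + e`, which contains `e`. -/
def IsFundCycle (ends : E → Sym2 V) (F : Set E) (e : E) (C : Set E) : Prop :=
  C ⊆ insert e F ∧ e ∈ C ∧ IsCycle ends C

end MG

/-!
Both fundamental objects survive the exchange. The cut `D(S, e)` is the set of edges joining the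
two components of the forest `S - e = S' - f`, so `D(S', f) = D(S, e)`; and `T + e = T' + f`
contains exactly one cycle, since removing any edge of a cycle in it leaves a spanning tree, which
has no cycle. Hence `C(T', f) = C(T, e)` and the two intersections coincide.
-/

namespace MG

open Finset

variable {V E : Type*} {ends : E → Sym2 V} {F F' : Set E} {g : E} {u v w x y : V}

theorem exists_ends_eq (ends : E → Sym2 V) (g : E) : ∃ x y, ends g = s(x, y) :=
  Sym2.ind (f := fun p => ∃ x y, p = s(x, y)) (fun x y => ⟨x, y, rfl⟩) (ends g)

theorem Reach.trans (huv : Reach ends F u v) (hvw : Reach ends F v w) : Reach ends F u w :=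
  Relation.ReflTransGen.trans huv hvw

theorem Reach.symm (h : Reach ends F u v) : Reach ends F v u := by
  have : Std.Symm (Adj ends F) := ⟨fun _ _ ⟨g, hg, hgs⟩ => ⟨g, hg, hgs.trans Sym2.eq_swap⟩⟩
  exact Std.Symm.symm (r := Relation.ReflTransGen (Adj ends F)) _ _ h

theorem Reach.mono (hF : F ⊆ F') (h : Reach ends F u v) : Reach ends F' u v :=
  Relation.ReflTransGen.mono (fun _ _ ⟨g, hg, hgs⟩ => ⟨g, hF hg, hgs⟩) _ _ h

theorem Reach.exists_mem_ends (h : Reach ends F u w) (hne : u ≠ w) : ∃ g ∈ F, w ∈ ends g := by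
  rcases Relation.ReflTransGen.cases_tail h with rfl | ⟨v, -, g, hg, hgs⟩
  · exact absurd rfl hne
  · exact ⟨g, hg, hgs ▸ Sym2.mem_mk_right v w⟩

theorem reach_insert_cases (hg : ends g = s(x, y)) (h : Reach ends (insert g F) u v) :
    Reach ends F u v ∨ (Reach ends F u x ∧ Reach ends F y v) ∨
      (Reach ends F u y ∧ Reach ends F x v) := by
  induction h with
  | refl => exact .inl .refl
  | tail _ hstep ih =>
    obtain ⟨h, hh, hends⟩ := hstep
    rcases hh with rfl | hh
    · rw [hg, Sym2.eq_iff] at hends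
      rcases hends with ⟨rfl, rfl⟩ | ⟨rfl, rfl⟩ <;> rcases ih with ih | ⟨h1, -⟩ | ⟨h1, -⟩
      exacts [.inr (.inl ⟨ih, .refl⟩), .inr (.inl ⟨h1, .refl⟩), .inl h1,
        .inr (.inr ⟨ih, .refl⟩), .inl h1, .inr (.inr ⟨h1, .refl⟩)]
    · have step : Reach ends F _ _ := .single ⟨h, hh, hends⟩
      rcases ih with ih | ⟨h1, h2⟩ | ⟨h1, h2⟩
      exacts [.inl (ih.trans step), .inr (.inl ⟨h1, h2.trans step⟩),
        .inr (.inr ⟨h1, h2.trans step⟩)]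

theorem reach_insert_eq (hg : ends g = s(x, y)) (hxy : Reach ends F x y) :
    Reach ends (insert g F) = Reach ends F := by
  funext u v
  refine propext ⟨fun h => ?_, Reach.mono (Set.subset_insert g F)⟩
  rcases reach_insert_cases hg h with h | ⟨h1, h2⟩ | ⟨h1, h2⟩
  exacts [h, h1.trans (hxy.trans h2), h1.trans (hxy.symm.trans h2)]

theorem Conn.reach_or_reach_of_insert (hF : Conn ends (insert g F)) (hg : ends g = s(x, y))
    (u : V) : Reach ends F u x ∨ Reach ends F u y := by
  rcases reach_insert_cases hg (hF u x) with h | ⟨h, -⟩ | ⟨h, -⟩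
  exacts [.inl h, .inl h, .inr h]

theorem conn_of_reach_or_reach (hsides : ∀ u, Reach ends F u x ∨ Reach ends F u y)
    (hxy : Reach ends F x y) : Conn ends F := by
  have hx : ∀ u, Reach ends F u x := fun u => (hsides u).elim id (·.trans hxy.symm)
  exact fun u v => (hx u).trans (hx v).symm

theorem Conn.card_le_card_add_one [Finite E] (hF : Conn ends F) :
    Nat.card V ≤ Nat.card F + 1 := by
  cases isEmpty_or_nonempty V
  · simp
  let G := SimpleGraph.fromEdgeSet (ends '' F)
  have hG : G.Connected := by
    refine ⟨fun u v => (SimpleGraph.reachable_iff_reflTransGen u v).2 ?_⟩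
    refine Relation.ReflTransGen.lift' id (fun a b ⟨g, hg, hab⟩ => ?_) _ _ (hF u v)
    by_cases hne : a = b
    · exact hne ▸ .refl
    · exact .single ((SimpleGraph.fromEdgeSet_adj _).2 ⟨⟨g, hg, hab⟩, hne⟩)
  calc Nat.card V ≤ Nat.card G.edgeSet + 1 := hG.card_vert_le_card_edgeSet_add_one
    _ ≤ Nat.card (ends '' F) + 1 := by
      gcongr
      exact Nat.card_mono (Set.toFinite _) (SimpleGraph.edgeSet_fromEdgeSet _ ▸ Set.sdiff_subset)
    _ ≤ Nat.card F + 1 := by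
      gcongr
      exact Nat.card_image_le (Set.toFinite F)

theorem IsSpanningTree.not_reach_diff_singleton [Finite E] {S : Set E} {e : E}
    (hS : IsSpanningTree ends S) (he : e ∈ S) (hxy : ends e = s(x, y)) :
    ¬ Reach ends (S \ {e}) x y := by
  intro hr
  have hconn : Conn ends (S \ {e}) := fun u v => by
    rw [← reach_insert_eq hxy hr, Set.insert_sdiff_singleton, Set.insert_eq_of_mem he]
    exact hS.1 u v
  have hcard := hconn.card_le_card_add_one
  have : Nonempty S := ⟨⟨e, he⟩⟩
  have hpos : 0 < Nat.card S := Nat.card_pos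
  rw [Nat.card_coe_set_eq, Set.ncard_sdiff_singleton_of_mem he, ← Nat.card_coe_set_eq] at hcard
  have := hS.2
  omega

theorem even_sum_card_incident [DecidableEq V] (hloop : ∀ e : E, ¬ (ends e).IsDiag)
    (F : Finset E) (X : Finset V)
    (hX : ∀ g ∈ F, ∀ a b, ends g = s(a, b) → a ∈ X → b ∈ X) :
    Even (∑ w ∈ X, #{g ∈ F | w ∈ ends g}) := by
  have hswap := Finset.sum_card_bipartiteAbove_eq_sum_card_bipartiteBelow
    (s := X) (t := F) (fun w g => w ∈ ends g)
  simp only [Finset.bipartiteAbove, Finset.bipartiteBelow] at hswap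
  rw [hswap]
  refine Finset.even_sum _ fun g hg => ?_
  obtain ⟨a, b, hab⟩ := exists_ends_eq ends g
  have hne : a ≠ b := fun h => hloop g (by rw [hab, h]; exact Sym2.mk_isDiag_iff.2 rfl)
  have hiff : a ∈ X ↔ b ∈ X := ⟨hX g hg a b hab, hX g hg b a (hab.trans Sym2.eq_swap)⟩
  have hfilter : {w ∈ X | w ∈ ends g} = if a ∈ X then {a, b} else ∅ := by
    ext w
    split_ifs <;> simp only [hab, Sym2.mem_iff, mem_filter, mem_insert, mem_singleton, notMem_empty]
      <;> grind
  rw [hfilter]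
  split_ifs
  · rw [Finset.card_pair hne]; exact even_two
  · exact Even.zero

/-- If `y` were not in the component `X` of `x` in `C - g`, then in `C - g` every vertex of `X`
would have degree `2` except `x`, of degree `1`, giving `X` an odd degree sum. -/
theorem IsCycle.reach_diff_singleton [Finite V] [Finite E] (hloop : ∀ e : E, ¬ (ends e).IsDiag)
    {C : Set E} (hC : IsCycle ends C) (hg : g ∈ C) (hxy : ends g = s(x, y)) :
    Reach ends (C \ {g}) x y := by
  classical
  have := Fintype.ofFinite V
  have := Fintype.ofFinite E
  by_contra hy
  let X : Finset V := {w | Reach ends (C \ {g}) x w}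
  let F : Finset E := {h | h ∈ C \ {g}}
  have hclosed : ∀ h ∈ F, ∀ a b, ends h = s(a, b) → a ∈ X → b ∈ X := by
    simp only [X, F, Finset.mem_filter, Finset.mem_univ, true_and]
    exact fun h hh a b hab ha => ha.trans (.single ⟨h, hh, hab⟩)
  have hdeg : ∀ w ∈ X, #{h ∈ F | w ∈ ends h} + (if w = x then 1 else 0) = 2 := by
    intro w hw
    replace hw : Reach ends (C \ {g}) x w := by simpa [X] using hw
    have hinc : ∃ h ∈ C, w ∈ ends h := by
      by_cases hwx : x = w
      · exact ⟨g, hg, hwx ▸ hxy ▸ Sym2.mem_mk_left x y⟩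
      · obtain ⟨h, hh, hwh⟩ := hw.exists_mem_ends hwx
        exact ⟨h, hh.1, hwh⟩
    have htwo : #{h | h ∈ C ∧ w ∈ ends h} = 2 := by
      rw [← hC.2.2 w hinc, Nat.card_eq_card_toFinset, Set.toFinset_ofPred]
    have herase : {h ∈ F | w ∈ ends h} = ({h | h ∈ C ∧ w ∈ ends h} : Finset E).erase g := by
      ext h
      simp only [F, Finset.mem_filter, Finset.mem_erase, Finset.mem_univ, true_and,
        Set.mem_sdiff, Set.mem_singleton_iff]
      tauto
    have hgw : g ∈ ({h | h ∈ C ∧ w ∈ ends h} : Finset E) ↔ w = x := by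
      simp only [Finset.mem_filter, Finset.mem_univ, true_and, hxy, Sym2.mem_iff]
      exact ⟨fun ⟨_, hw'⟩ => hw'.resolve_right (by rintro rfl; exact hy hw),
        fun hwx => ⟨hg, .inl hwx⟩⟩
    rw [herase]
    split_ifs with hwx
    · rw [Finset.card_erase_of_mem (hgw.2 hwx), htwo]
    · rw [Finset.erase_eq_of_notMem (hwx ∘ hgw.1), htwo]
  have hx : x ∈ X := Finset.mem_filter.2 ⟨Finset.mem_univ x, .refl⟩
  have hodd : ∑ w ∈ X, #{h ∈ F | w ∈ ends h} + 1 = 2 * #X := by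
    rw [← if_pos hx (t := 1) (e := 0), ← Finset.sum_ite_eq' X x (fun _ => 1),
      ← Finset.sum_add_distrib, Finset.sum_congr rfl hdeg, Finset.sum_const, smul_eq_mul, mul_comm]
  obtain ⟨k, hk⟩ := even_sum_card_incident hloop F X hclosed
  omega

section SpanningTree

variable [Finite V] [Finite E] (hloop : ∀ e : E, ¬ (ends e).IsDiag) {T C C' : Set E} {e : E}
include hloop

theorem IsSpanningTree.not_isCycle_of_subset (hT : IsSpanningTree ends T) (hCT : C ⊆ T) :
    ¬ IsCycle ends C := by
  intro hC
  obtain ⟨g, hg⟩ := hC.1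
  obtain ⟨x, y, hxy⟩ := exists_ends_eq ends g
  exact hT.not_reach_diff_singleton (hCT hg) hxy
    ((hC.reach_diff_singleton hloop hg hxy).mono (Set.sdiff_subset_sdiff_left hCT))

theorem IsSpanningTree.insert_diff_singleton_of_isCycle (hT : IsSpanningTree ends T)
    (heT : e ∉ T) (hC : IsCycle ends C) (hCT : C ⊆ insert e T) (hg : g ∈ C) :
    IsSpanningTree ends (insert e T \ {g}) := by
  obtain ⟨x, y, hxy⟩ := exists_ends_eq ends g
  have hreach := (hC.reach_diff_singleton hloop hg hxy).mono (Set.sdiff_subset_sdiff_left hCT)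
  refine ⟨fun u v => ?_, ?_⟩
  · rw [← reach_insert_eq hxy hreach, Set.insert_sdiff_singleton, Set.insert_eq_of_mem (hCT hg)]
    exact (hT.1 u v).mono (Set.subset_insert e T)
  · rw [Nat.card_coe_set_eq, Set.ncard_sdiff_singleton_of_mem (hCT hg),
      Set.ncard_insert_of_notMem heT, ← Nat.card_coe_set_eq, hT.2, Nat.add_sub_cancel]

theorem IsSpanningTree.subset_of_isCycle (hT : IsSpanningTree ends T) (heT : e ∉ T)
    (hC : IsCycle ends C) (hC' : IsCycle ends C') (hCT : C ⊆ insert e T)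
    (hC'T : C' ⊆ insert e T) : C ⊆ C' := by
  intro g hg
  by_contra hg'
  refine (hT.insert_diff_singleton_of_isCycle hloop heT hC hCT hg).not_isCycle_of_subset hloop
    (fun h hh => ⟨hC'T hh, fun hhg => hg' (hhg ▸ hh)⟩) hC'

theorem IsSpanningTree.eq_of_isCycle (hT : IsSpanningTree ends T) (heT : e ∉ T)
    (hC : IsCycle ends C) (hC' : IsCycle ends C') (hCT : C ⊆ insert e T)
    (hC'T : C' ⊆ insert e T) : C = C' :=
  (hT.subset_of_isCycle hloop heT hC hC' hCT hC'T).antisymm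
    (hT.subset_of_isCycle hloop heT hC' hC hC'T hCT)

end SpanningTree

theorem IsEdgeCut.not_conn_compl {D : Set E} (hD : IsEdgeCut ends D) : ¬ Conn ends Dᶜ := by
  intro hconn
  have : Reach ends Dᶜ = Reach ends Set.univ :=
    funext₂ fun u v => propext ⟨Reach.mono (Set.subset_univ _), fun _ => hconn u v⟩
  rw [IsEdgeCut, numComp, numComp, this] at hD
  exact lt_irrefl _ hD

theorem IsMinEdgeCut.not_reach_compl {D : Set E} (hD : IsMinEdgeCut ends D) (hg : g ∈ D)
    (hxy : ends g = s(x, y)) : ¬ Reach ends Dᶜ x y := by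
  intro hreach
  refine hD.2 (D \ {g}) (Set.sdiff_singleton_ssubset.2 hg) ?_
  rw [IsEdgeCut, Set.compl_sdiff, Set.singleton_union, numComp, numComp, reach_insert_eq hxy hreach]
  exact hD.1

theorem IsMinEdgeCut.eq_setOf_not_reach {A D : Set E} (hD : IsMinEdgeCut ends D) (hDA : D ⊆ Aᶜ)
    (hsides : ∀ u, Reach ends A u x ∨ Reach ends A u y) :
    D = {g | ∀ a b, ends g = s(a, b) → ¬ Reach ends A a b} := by
  have hAD : A ⊆ Dᶜ := Set.subset_compl_comm.1 hDA
  ext g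
  refine ⟨fun hg a b hab hreach => hD.not_reach_compl hg hab (hreach.mono hAD), fun hcross => ?_⟩
  by_contra hg
  obtain ⟨a, b, hab⟩ := exists_ends_eq ends g
  have hstep : Reach ends Dᶜ a b := .single ⟨g, hg, hab⟩
  have hsep : ¬ Reach ends Dᶜ x y := fun h => hD.1.not_conn_compl
    (conn_of_reach_or_reach (fun u => (hsides u).imp (·.mono hAD) (·.mono hAD)) h)
  rcases hsides a with ha | ha <;> rcases hsides b with hb | hb
  · exact hcross a b hab (ha.trans hb.symm)
  · exact hsep ((ha.mono hAD).symm.trans (hstep.trans (hb.mono hAD)))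
  · exact hsep ((hb.mono hAD).symm.trans (hstep.symm.trans (ha.mono hAD)))
  · exact hcross a b hab (ha.trans hb.symm)

end MG

theorem unique_exchange_reversible_general {V E : Type*} [Finite V] [Finite E]
    (ends : E → Sym2 V) (hloop : ∀ e : E, ¬ (ends e).IsDiag)
    (S T : Set E) (hd : Disjoint S T)
    (hS : MG.IsSpanningTree ends S) (hT : MG.IsSpanningTree ends T)
    (e f : E) (he : e ∈ S) (hf : f ∈ T)
    (D C : Set E)
    (hD : MG.IsFundCut ends S e D) (hC : MG.IsFundCycle ends T e C)
    (hUE : D ∩ C = {e, f})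
    (D' C' : Set E)
    (hD' : MG.IsFundCut ends (insert f (S \ {e})) f D')
    (hC' : MG.IsFundCycle ends (insert e (T \ {f})) f C') :
    D' ∩ C' = {e, f} := by
  obtain ⟨x, y, hxy⟩ := MG.exists_ends_eq ends e
  have hconn : MG.Conn ends (insert e (S \ {e})) := by
    rw [Set.insert_sdiff_singleton, Set.insert_eq_of_mem he]
    exact hS.1
  have hsides := hconn.reach_or_reach_of_insert hxy
  have hDA : D ⊆ (S \ {e})ᶜ := by
    rw [Set.compl_sdiff, Set.singleton_union]
    exact hD.1
  have hD'A : D' ⊆ (S \ {e})ᶜ := by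
    refine hD'.1.trans (Set.insert_subset_iff.2 ⟨fun hfS => ?_, Set.compl_subset_compl.2 ?_⟩)
    · exact Set.disjoint_right.1 hd hf hfS.1
    · exact Set.subset_insert f _
  have hC'T : C' ⊆ insert e T := by
    refine hC'.1.trans (Set.insert_subset_iff.2 ⟨.inr hf, ?_⟩)
    exact Set.insert_subset_insert Set.sdiff_subset
  rw [hD'.2.2.eq_setOf_not_reach hD'A hsides, ← hD.2.2.eq_setOf_not_reach hDA hsides,
    ← hT.eq_of_isCycle hloop (Set.disjoint_left.1 hd he) hC.2.2 hC'.2.2 hC.1 hC'T, hUE]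

/-- Unique symmetric edge exchanges are reversible: if `(e,f) ∈ S × T` with
`D(S,e) ∩ C(T,e) = {e,f}`, then for `S' = S - e + f`, `T' = T + e - f` one has
`D(S',f) ∩ C(T',f) = {e,f}`, i.e. `(f,e)` is a unique exchange returning to `(S,T)`. -/
theorem unique_exchange_reversible {V E : Type*} [Finite V] [Finite E]
    (ends : E → Sym2 V) (hloop : ∀ e : E, ¬ (ends e).IsDiag)
    (S T : Set E) (hU : S ∪ T = Set.univ) (hd : Disjoint S T)
    (hS : MG.IsSpanningTree ends S) (hT : MG.IsSpanningTree ends T)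
    (e f : E) (he : e ∈ S) (hf : f ∈ T)
    (D C : Set E)
    (hD : MG.IsFundCut ends S e D) (hC : MG.IsFundCycle ends T e C)
    (hUE : D ∩ C = {e, f})
    (D' C' : Set E)
    (hD' : MG.IsFundCut ends (insert f (S \ {e})) f D')
    (hC' : MG.IsFundCycle ends (insert e (T \ {f})) f C') :
    D' ∩ C' = {e, f} :=
  unique_exchange_reversible_general ends hloop S T hd hS hT e f he hf D C hD hC hUE D' C' hD' hC'
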